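/- Let (c, λ/μ) be a placed skew shape with n boxes, let C be the column reading tableau of shape λ/μ, and for each standard tableau L of shape λ/μ let n_L = T_w v_C, where w ∈ S_n is the permutation with L = wC. Then {n_L : L a standard tableau of shape λ/μ} is a basis of H̃^{(c,λ/μ)}. -/

import Mathlib

open scoped Classical

noncomputable section

/-! ## Partitions and skew shapes -/

/-- A partition: a weakly decreasing sequence of natural numbers that is eventually zero. -/
structure Partition' where
  part : ℕ → ℕ
  antitone : Antitone part
  eventually_zero : ∃ N, part N = 0

/-- A skew shape `λ/μ`: a pair of partitions with `μ ⊆ λ`. -/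
structure SkewShape where
  lam : Partition'
  mu : Partition'
  mu_le : ∀ i, mu.part i ≤ lam.part i

/-- The boxes of the skew shape: pairs `(row, column)` (0-indexed). -/
def SkewShape.cellSet (S : SkewShape) : Set (ℕ × ℕ) :=
  {b | S.mu.part b.1 ≤ b.2 ∧ b.2 < S.lam.part b.1}

theorem SkewShape.cellSet_finite (S : SkewShape) : S.cellSet.Finite := by
  obtain ⟨N, hN⟩ := S.lam.eventually_zero
  refine Set.Finite.subset ((Set.finite_Iio N).prod (Set.finite_Iio (S.lam.part 0))) ?_
  rintro ⟨r, c⟩ ⟨h1, h2⟩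
  dsimp only at h1 h2
  have h0 : S.lam.part r ≤ S.lam.part 0 := S.lam.antitone (Nat.zero_le r)
  constructor
  · simp only [Set.mem_Iio]
    by_contra h
    push_neg at h
    have : S.lam.part r ≤ S.lam.part N := S.lam.antitone h
    omega
  · simp only [Set.mem_Iio]; omega

/-- The boxes of a skew shape, as a finite set. -/
def SkewShape.cells (S : SkewShape) : Finset (ℕ × ℕ) := S.cellSet_finite.toFinset

theorem SkewShape.mem_cells {S : SkewShape} {b : ℕ × ℕ} :
    b ∈ S.cells ↔ S.mu.part b.1 ≤ b.2 ∧ b.2 < S.lam.part b.1 := by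
  simp [SkewShape.cells, SkewShape.cellSet]

/-- The (major) diagonal on which a box sits. -/
def boxDiag (b : ℕ × ℕ) : ℤ := (b.2 : ℤ) - (b.1 : ℤ)

/-- The order in which the boxes of a skew shape are numbered `box₁, …, boxₙ`:
along major diagonals from southwest to northeast. -/
def numLT (b b' : ℕ × ℕ) : Prop :=
  boxDiag b < boxDiag b' ∨ (boxDiag b = boxDiag b' ∧ b.1 < b'.1)

/-- Column reading order on boxes. -/
def colLT (b b' : ℕ × ℕ) : Prop := b.2 < b'.2 ∨ (b.2 = b'.2 ∧ b.1 < b'.1)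

/-- Row reading order on boxes. -/
def rowLT (b b' : ℕ × ℕ) : Prop := b.1 < b'.1 ∨ (b.1 = b'.1 ∧ b.2 < b'.2)

/-- A standard tableau of shape `S` with `n` boxes and entries `off+1, …, off+n`:
entries increase to the right along rows and down columns. -/
structure StdTab (S : SkewShape) (off n : ℕ) where
  entry : ℕ × ℕ → ℕ
  zero_off : ∀ b, b ∉ S.cells → entry b = 0
  bijOn : Set.BijOn entry ↑S.cells (Set.Icc (off + 1) (off + n))
  row_inc : ∀ r c, (r, c) ∈ S.cells → (r, c + 1) ∈ S.cells → entry (r, c) < entry (r, c + 1)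
  col_inc : ∀ r c, (r, c) ∈ S.cells → (r + 1, c) ∈ S.cells → entry (r, c) < entry (r + 1, c)

/-- `L.box i` : the box of the standard tableau `L` containing the entry `i`. -/
def StdTab.box {S : SkewShape} {off n : ℕ} (L : StdTab S off n) (i : ℕ) : ℕ × ℕ :=
  Function.invFunOn L.entry ↑S.cells i

/-- The column reading tableau: entries `1,…,n` entered consecutively down the columns,
beginning with the southwest-most connected component, filling columns left to right.
(Equivalently: the entries are increasing for the column reading order on boxes.) -/
def IsColReading {S : SkewShape} {off n : ℕ} (C : StdTab S off n) : Prop :=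
  ∀ b ∈ S.cells, ∀ b' ∈ S.cells, (colLT b b' ↔ C.entry b < C.entry b')

/-- The row reading tableau: entries `1,…,n` entered left to right across the rows,
beginning with the northeast-most connected component, filling rows top to bottom. -/
def IsRowReading {S : SkewShape} {off n : ℕ} (R : StdTab S off n) : Prop :=
  ∀ b ∈ S.cells, ∀ b' ∈ S.cells, (rowLT b b' ↔ R.entry b < R.entry b')

/-! ## Placed skew shapes -/

/-- `q^{2z} = e^{z ln (q²)}`. -/
def qpow (q : ℝ) (z : ℂ) : ℂ := Complex.exp (z * Real.log (q ^ 2))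

/-- A placed skew shape `(c, λ/μ)`: a skew shape together with a content function on its
boxes with values in `ℝ + i[0, 2π/ln(q²))`, weakly increasing (among boxes whose contents
differ by integers) for the numbering order, increasing by exactly `1` precisely between
adjacent diagonals and constant precisely on diagonals. -/
structure PlacedSkewShape (q : ℝ) where
  S : SkewShape
  c : ℕ × ℕ → ℂ
  im_range : ∀ b ∈ S.cells, 0 ≤ (c b).im ∧ (c b).im < 2 * Real.pi / Real.log (q ^ 2)
  num_mono : ∀ b ∈ S.cells, ∀ b' ∈ S.cells, numLT b b' →
      (∃ k : ℤ, c b' - c b = (k : ℂ)) → (c b).re ≤ (c b').re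
  adj_diag : ∀ b ∈ S.cells, ∀ b' ∈ S.cells, (c b' = c b + 1 ↔ boxDiag b' = boxDiag b + 1)
  same_diag : ∀ b ∈ S.cells, ∀ b' ∈ S.cells, (c b = c b' ↔ boxDiag b = boxDiag b')

/-! ## The affine Hecke algebra: module structures

A module for the affine Hecke algebra `H̃_n` (with parameter `q`) is a complex vector
space together with operators `T_1, …, T_{n-1}` and invertible pairwise commuting
operators `x_1, …, x_n` satisfying the defining relations of `H̃_n`. -/

structure AHMod (n : ℕ) (q : ℂ) (M : Type) [AddCommGroup M] [Module ℂ M] where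
  T : ℕ → Module.End ℂ M
  x : ℕ → Module.End ℂ M
  comm_TT : ∀ i j, 1 ≤ i → j ≤ n - 1 → i + 1 < j → T i * T j = T j * T i
  braid : ∀ i, 1 ≤ i → i + 1 ≤ n - 1 → T i * T (i + 1) * T i = T (i + 1) * T i * T (i + 1)
  quad : ∀ i, 1 ≤ i → i ≤ n - 1 → T i * T i = (q - q⁻¹) • T i + 1
  comm_xx : ∀ i j, 1 ≤ i → i ≤ n → 1 ≤ j → j ≤ n → x i * x j = x j * x i
  comm_xT : ∀ i j, 1 ≤ i → i ≤ n → 1 ≤ j → j ≤ n - 1 → j + 1 ≠ i → j ≠ i →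
      x i * T j = T j * x i
  xsucc : ∀ i, 1 ≤ i → i + 1 ≤ n → x (i + 1) = T i * x i * T i
  x_unit : ∀ i, 1 ≤ i → i ≤ n → IsUnit (x i)

namespace AHMod

variable {n : ℕ} {q : ℂ} {M : Type} [AddCommGroup M] [Module ℂ M]

/-- `m` lies in the generalized weight space `M_t^gen`. -/
def genWt (A : AHMod n q M) (t : ℕ → ℂ) (m : M) : Prop :=
  ∀ i, 1 ≤ i → i ≤ n → ∃ k : ℕ, 0 < k ∧ ((A.x i - t i • (1 : Module.End ℂ M)) ^ k) m = 0

/-- `m` is a simultaneous eigenvector (weight vector) of weight `t`. -/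
def wtVec (A : AHMod n q M) (t : ℕ → ℂ) (m : M) : Prop :=
  ∀ i, 1 ≤ i → i ≤ n → A.x i m = t i • m

/-- `t` is a weight of `M`, i.e. `M_t^gen ≠ 0`. -/
def IsWeight (A : AHMod n q M) (t : ℕ → ℂ) : Prop := ∃ m : M, m ≠ 0 ∧ A.genWt t m

/-- A module is calibrated if it has a basis of simultaneous eigenvectors for the `x_i`. -/
def Calibrated (A : AHMod n q M) : Prop :=
  ∃ (ι : Type) (b : Module.Basis ι ℂ M), ∀ j : ι, ∃ t : ℕ → ℂ, A.wtVec t (b j)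

/-- A submodule invariant under all the operators. -/
def InvariantSub (A : AHMod n q M) (N : Submodule ℂ M) : Prop :=
  (∀ i, 1 ≤ i → i ≤ n - 1 → ∀ m ∈ N, A.T i m ∈ N) ∧
  (∀ i, 1 ≤ i → i ≤ n → ∀ m ∈ N, A.x i m ∈ N)

/-- Irreducibility: nonzero, and no invariant submodules besides `⊥` and `⊤`. -/
def IsIrreducible (A : AHMod n q M) : Prop :=
  (∃ m : M, m ≠ 0) ∧ ∀ N : Submodule ℂ M, A.InvariantSub N → N = ⊥ ∨ N = ⊤

end AHMod

/-- The weight `s_i t`: `t` with its `i`-th and `(i+1)`-st coordinates interchanged. -/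
def swapW (i : ℕ) (t : ℕ → ℂ) : ℕ → ℂ := fun j =>
  if j = i then t (i + 1) else if j = i + 1 then t i else t j

/-- The relation `m' = τ_i m` for `m` in the generalized weight space `M_t^gen`:
`m' = (T_i - (q - q⁻¹) x_{i+1} (x_{i+1} - x_i)⁻¹) m`, where the inverse is witnessed by an
element `u ∈ M_t^gen` with `(x_{i+1} - x_i) u = m`. -/
def AHMod.IsTau {n : ℕ} {q : ℂ} {M : Type} [AddCommGroup M] [Module ℂ M]
    (A : AHMod n q M) (i : ℕ) (t : ℕ → ℂ) (m m' : M) : Prop :=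
  A.genWt t m ∧ ∃ u, A.genWt t u ∧ (A.x (i + 1) - A.x i) u = m ∧
    m' = A.T i m - (q - q⁻¹) • (A.x (i + 1)) u

/-- `A.IsTauChain l t m m'` : `m' = τ_{i_p} ⋯ τ_{i_1} m` where `l = [i_1, …, i_p]` and
`m ∈ M_t^gen` (so `l` is the word read right-to-left: the head of `l` acts first). -/
def AHMod.IsTauChain {n : ℕ} {q : ℂ} {M : Type} [AddCommGroup M] [Module ℂ M]
    (A : AHMod n q M) : List ℕ → (ℕ → ℂ) → M → M → Prop
  | [], _, m, m' => m' = m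
  | i :: l, t, m, m' => ∃ a, A.IsTau i t m a ∧ A.IsTauChain l (swapW i t) a m'

/-! ## The modules `H̃^{(c,λ/μ)}` -/

/-- The effect on entries of interchanging `i` and `i+1`. -/
def swapEnt (i k : ℕ) : ℕ := if k = i then i + 1 else if k = i + 1 then i else k

/-- `L'` is the tableau `s_i L`: `L` with the entries `i` and `i+1` interchanged. -/
def IsSwapTab {S : SkewShape} {off n : ℕ} (i : ℕ) (L L' : StdTab S off n) : Prop :=
  ∀ b, L'.entry b = swapEnt i (L.entry b)

/-- The basis vector `v_{s_i L}`, interpreted as `0` if `s_i L` is not standard. -/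
def vswap {S : SkewShape} {off n : ℕ} (i : ℕ) (L : StdTab S off n) : StdTab S off n →₀ ℂ :=
  if h : ∃ L', IsSwapTab i L L' then Finsupp.single h.choose 1 else 0

/-- The diagonal coefficient `(T_i)_{LL} = (q - q⁻¹)/(1 - q^{2(c(L(i)) - c(L(i+1)))})`. -/
def TLL {q : ℝ} (P : PlacedSkewShape q) (off n i : ℕ) (L : StdTab P.S off n) : ℂ :=
  ((q : ℂ) - (q : ℂ)⁻¹) / (1 - qpow q (P.c (L.box i) - P.c (L.box (i + 1))))

/-- `A` is the `H̃_n`-module `H̃^{(c,λ/μ)}`: the prescribed action on the basis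
`{v_L}` indexed by standard tableaux. -/
def IsHTilde {q : ℝ} (n : ℕ) (P : PlacedSkewShape q)
    (A : AHMod n (q : ℂ) (StdTab P.S 0 n →₀ ℂ)) : Prop :=
  (∀ i, 1 ≤ i → i ≤ n → ∀ L : StdTab P.S 0 n,
      A.x i (Finsupp.single L 1) = qpow q (P.c (L.box i)) • Finsupp.single L 1) ∧
  (∀ i, 1 ≤ i → i ≤ n - 1 → ∀ L : StdTab P.S 0 n,
      A.T i (Finsupp.single L 1) =
        TLL P 0 n i L • Finsupp.single L 1 + ((q : ℂ)⁻¹ + TLL P 0 n i L) • vswap i L)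

/-! ## Words in the simple transpositions, reduced words, `T_w` -/

/-- A word in the simple transpositions `s_1, …, s_{n-1}`. -/
def isWord (n : ℕ) (l : List ℕ) : Prop := ∀ i ∈ l, 1 ≤ i ∧ i + 1 ≤ n

/-- The permutation of `{1, …, n} ⊆ ℕ` given by a word (`s_i` = transposition `(i, i+1)`). -/
def wordProd (l : List ℕ) : Equiv.Perm ℕ := (l.map fun i => Equiv.swap i (i + 1)).prod

/-- A reduced word: of minimal length among all words with the same product. -/
def isReducedWord (n : ℕ) (l : List ℕ) : Prop :=
  isWord n l ∧ ∀ l', isWord n l' → wordProd l' = wordProd l → l.length ≤ l'.length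

/-- The length `ℓ(w)` of a permutation: the length of a reduced word for it. -/
def lenOf (n : ℕ) (w : Equiv.Perm ℕ) : ℕ :=
  sInf {p | ∃ l, isWord n l ∧ wordProd l = w ∧ l.length = p}

/-- Bruhat-Chevalley order on `S_n`: `v ≤ w` if some reduced expression for `w` has a
subword equal to `v`. -/
def BruhatLE (n : ℕ) (v w : Equiv.Perm ℕ) : Prop :=
  ∃ l, isReducedWord n l ∧ wordProd l = w ∧ ∃ l', List.Sublist l' l ∧ wordProd l' = v

/-- The operator `T_{i_1} ⋯ T_{i_p}` for a word `l = [i_1, …, i_p]`. -/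
def TopWord {n : ℕ} {q : ℂ} {M : Type} [AddCommGroup M] [Module ℂ M]
    (A : AHMod n q M) (l : List ℕ) : Module.End ℂ M := (l.map A.T).prod

end

noncomputable section Aux

/-! ### Basic tableau helpers -/

theorem StdTab.ext' {S : SkewShape} {off n : ℕ} {L L' : StdTab S off n}
    (h : L.entry = L'.entry) : L = L' := by
  cases L; cases L'; cases h; rfl

theorem StdTab.entry_mem {S : SkewShape} {off n : ℕ} (L : StdTab S off n) {b : ℕ × ℕ}
    (hb : b ∈ S.cells) : L.entry b ∈ Set.Icc (off + 1) (off + n) :=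
  L.bijOn.mapsTo hb

theorem StdTab.box_mem {S : SkewShape} {off n : ℕ} (L : StdTab S off n) {j : ℕ}
    (hj : j ∈ Set.Icc (off + 1) (off + n)) : L.box j ∈ S.cells := by
  have hs := L.bijOn.surjOn hj
  obtain ⟨b, hb, hbe⟩ := hs
  exact Function.invFunOn_mem ⟨b, hb, hbe⟩

theorem StdTab.entry_box {S : SkewShape} {off n : ℕ} (L : StdTab S off n) {j : ℕ}
    (hj : j ∈ Set.Icc (off + 1) (off + n)) : L.entry (L.box j) = j := by
  have hs := L.bijOn.surjOn hj
  obtain ⟨b, hb, hbe⟩ := hs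
  exact Function.invFunOn_eq ⟨b, hb, hbe⟩

theorem StdTab.box_eq {S : SkewShape} {off n : ℕ} (L : StdTab S off n) {j : ℕ}
    (hj : j ∈ Set.Icc (off + 1) (off + n)) {b : ℕ × ℕ} (hb : b ∈ S.cells)
    (he : L.entry b = j) : b = L.box j := by
  refine L.bijOn.injOn hb (by exact_mod_cast L.box_mem hj) ?_
  rw [he, L.entry_box hj]

/-- Row chain: entries increase by at least `k` going `k` steps right. -/
theorem StdTab.row_chain {S : SkewShape} {off n : ℕ} (L : StdTab S off n) {r c : ℕ} (k : ℕ)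
    (h1 : (r, c) ∈ S.cells) (h2 : (r, c + k) ∈ S.cells) :
    L.entry (r, c) + k ≤ L.entry (r, c + k) := by
  induction k with
  | zero => simp
  | succ k ih =>
    have h2' : (r, c + k + 1) ∈ S.cells := h2
    have hmem : (r, c + k) ∈ S.cells := by
      rw [SkewShape.mem_cells] at h1 h2' ⊢
      simp only at h1 h2' ⊢
      omega
    have ha := L.row_inc r (c + k) hmem h2'
    have hb := ih hmem
    show L.entry (r, c) + (k + 1) ≤ L.entry (r, c + k + 1)
    omega

/-- Column chain: entries increase by at least `k` going `k` steps down. -/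
theorem StdTab.col_chain {S : SkewShape} {off n : ℕ} (L : StdTab S off n) {r c : ℕ} (k : ℕ)
    (h1 : (r, c) ∈ S.cells) (h2 : (r + k, c) ∈ S.cells) :
    L.entry (r, c) + k ≤ L.entry (r + k, c) := by
  induction k with
  | zero => simp
  | succ k ih =>
    have h2' : (r + k + 1, c) ∈ S.cells := h2
    have hmem : (r + k, c) ∈ S.cells := by
      rw [SkewShape.mem_cells] at h1 h2' ⊢
      simp only at h1 h2' ⊢
      constructor
      · exact le_trans (S.mu.antitone (Nat.le_add_right r k)) h1.1
      · exact lt_of_lt_of_le h2'.2 (S.lam.antitone (by omega))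
    have ha := L.col_inc (r + k) c hmem h2'
    have hb := ih hmem
    show L.entry (r, c) + (k + 1) ≤ L.entry (r + k + 1, c)
    omega

/-- NE corner of a rectangle spanned by two boxes is in the shape. -/
theorem SkewShape.corner_mem {S : SkewShape} {r1 c1 r2 c2 : ℕ}
    (h1 : (r1, c1) ∈ S.cells) (h2 : (r2, c2) ∈ S.cells) (hr : r1 ≤ r2) (hc : c1 ≤ c2) :
    (r1, c2) ∈ S.cells := by
  rw [SkewShape.mem_cells] at h1 h2 ⊢
  simp only at h1 h2 ⊢
  exact ⟨le_trans h1.1 hc, lt_of_lt_of_le h2.2 (S.lam.antitone hr)⟩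

/-! ### swapEnt helpers -/

theorem swapEnt_invol (i k : ℕ) : swapEnt i (swapEnt i k) = k := by
  unfold swapEnt; split_ifs <;> omega

theorem swapEnt_lt {i e e' : ℕ} (h : e < e') (hne : ¬(e = i ∧ e' = i + 1)) :
    swapEnt i e < swapEnt i e' := by
  unfold swapEnt; split_ifs <;> omega

theorem swapEnt_eq_swap (i k : ℕ) : swapEnt i k = Equiv.swap i (i + 1) k := by
  rw [Equiv.swap_apply_def, swapEnt]

theorem swapEnt_i (i : ℕ) : swapEnt i i = i + 1 := by
  rw [swapEnt, if_pos rfl]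

theorem swapEnt_i1 (i : ℕ) : swapEnt i (i + 1) = i := by
  rw [swapEnt, if_neg (by omega), if_pos rfl]

theorem swapEnt_zero {i : ℕ} (hi : 1 ≤ i) : swapEnt i 0 = 0 := by
  rw [swapEnt, if_neg (by omega), if_neg (by omega)]

theorem swapEnt_mem_Icc {n i k : ℕ} (hi : 1 ≤ i) (hin : i + 1 ≤ n)
    (hk : k ∈ Set.Icc 1 n) : swapEnt i k ∈ Set.Icc 1 n := by
  simp only [Set.mem_Icc] at hk ⊢
  unfold swapEnt; split_ifs <;> omega

/-! ### Existence and uniqueness of the swapped tableau -/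

theorem IsSwapTab.unique {S : SkewShape} {off n : ℕ} {i : ℕ} {L L₁ L₂ : StdTab S off n}
    (h1 : IsSwapTab i L L₁) (h2 : IsSwapTab i L L₂) : L₁ = L₂ :=
  StdTab.ext' (funext fun b => by rw [h1 b, h2 b])

theorem IsSwapTab.symm {S : SkewShape} {off n : ℕ} {i : ℕ} {L L' : StdTab S off n}
    (h : IsSwapTab i L L') : IsSwapTab i L' L := fun b => by
  rw [h b, swapEnt_invol]

theorem exists_swapTab {S : SkewShape} {n : ℕ} (L : StdTab S 0 n) {i : ℕ}
    (hi : 1 ≤ i) (hin : i + 1 ≤ n)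
    (hrow : ∀ r c, (r, c) ∈ S.cells → (r, c + 1) ∈ S.cells →
      ¬(L.entry (r, c) = i ∧ L.entry (r, c + 1) = i + 1))
    (hcol : ∀ r c, (r, c) ∈ S.cells → (r + 1, c) ∈ S.cells →
      ¬(L.entry (r, c) = i ∧ L.entry (r + 1, c) = i + 1)) :
    ∃ L', IsSwapTab i L L' := by
  have hIcc : ∀ b ∈ S.cells, L.entry b ∈ Set.Icc 1 n := by
    intro b hb; simpa using L.entry_mem hb
  refine ⟨⟨fun b => swapEnt i (L.entry b), ?_, ⟨?_, ?_, ?_⟩, ?_, ?_⟩, fun b => rfl⟩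
  · intro b hb
    show swapEnt i (L.entry b) = 0
    rw [L.zero_off b hb, swapEnt_zero hi]
  · intro b hb
    simpa using swapEnt_mem_Icc hi hin (hIcc b hb)
  · intro b hb b' hb' he
    refine L.bijOn.injOn hb hb' ?_
    have := congrArg (swapEnt i) he
    rwa [swapEnt_invol, swapEnt_invol] at this
  · intro k hk
    simp only [Set.mem_Icc, zero_add] at hk
    have h1 : swapEnt i k ∈ Set.Icc (0 + 1) (0 + n) := by
      simpa using swapEnt_mem_Icc hi hin (by simpa using hk)
    obtain ⟨b, hb, hbe⟩ := L.bijOn.surjOn h1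
    refine ⟨b, hb, ?_⟩
    show swapEnt i (L.entry b) = k
    rw [hbe, swapEnt_invol]
  · intro r c h1 h2
    exact swapEnt_lt (L.row_inc r c h1 h2) (hrow r c h1 h2)
  · intro r c h1 h2
    exact swapEnt_lt (L.col_inc r c h1 h2) (hcol r c h1 h2)

theorem vswap_eq_single {S : SkewShape} {off n : ℕ} {i : ℕ} {L L' : StdTab S off n}
    (h : IsSwapTab i L L') : vswap i L = Finsupp.single L' 1 := by
  rw [vswap, dif_pos ⟨L', h⟩]
  congr 1
  exact IsSwapTab.unique (Exists.choose_spec (⟨L', h⟩ : ∃ L', IsSwapTab i L L')) h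

theorem vswap_cases {S : SkewShape} {off n : ℕ} (i : ℕ) (L : StdTab S off n) :
    (∃ L', IsSwapTab i L L' ∧ vswap i L = Finsupp.single L' 1) ∨ vswap i L = 0 := by
  by_cases h : ∃ L', IsSwapTab i L L'
  · obtain ⟨L', hL'⟩ := h
    exact Or.inl ⟨L', hL', vswap_eq_single hL'⟩
  · right; rw [vswap, dif_neg h]

theorem IsSwapTab.box_i {S : SkewShape} {n : ℕ} {i : ℕ} {L L' : StdTab S 0 n}
    (h : IsSwapTab i L L') (hi : 1 ≤ i) (hin : i + 1 ≤ n) :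
    L'.box i = L.box (i + 1) := by
  have hj : (i + 1 : ℕ) ∈ Set.Icc (0 + 1) (0 + n) := by simp only [Set.mem_Icc, zero_add]; omega
  refine (L'.box_eq (by simp only [Set.mem_Icc, zero_add]; omega) (L.box_mem hj) ?_).symm
  rw [h _, L.entry_box hj, swapEnt_i1]

theorem IsSwapTab.box_i1 {S : SkewShape} {n : ℕ} {i : ℕ} {L L' : StdTab S 0 n}
    (h : IsSwapTab i L L') (hi : 1 ≤ i) (hin : i + 1 ≤ n) :
    L'.box (i + 1) = L.box i := by
  have hj : (i : ℕ) ∈ Set.Icc (0 + 1) (0 + n) := by simp only [Set.mem_Icc, zero_add]; omega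
  refine (L'.box_eq (by simp only [Set.mem_Icc, zero_add]; omega) (L.box_mem hj) ?_).symm
  rw [h _, L.entry_box hj, swapEnt_i]

end Aux
noncomputable section Aux2

/-! ### Word lemmas -/

theorem wordProd_nil : wordProd [] = 1 := rfl

theorem wordProd_cons (i : ℕ) (l : List ℕ) :
    wordProd (i :: l) = Equiv.swap i (i + 1) * wordProd l := by
  simp [wordProd]

theorem wordProd_concat (l : List ℕ) (j : ℕ) :
    wordProd (l ++ [j]) = wordProd l * Equiv.swap j (j + 1) := by
  simp [wordProd]

theorem isWord_cons {n i : ℕ} {l : List ℕ} (h : isWord n (i :: l)) :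
    (1 ≤ i ∧ i + 1 ≤ n) ∧ isWord n l :=
  ⟨h i List.mem_cons_self, fun j hj => h j (List.mem_cons_of_mem i hj)⟩

theorem wordProd_fix {n : ℕ} {l : List ℕ} (h : isWord n l) {k : ℕ}
    (hk : k ∉ Set.Icc 1 n) : wordProd l k = k := by
  induction l with
  | nil => rfl
  | cons i t ih =>
    obtain ⟨⟨hi1, hi2⟩, ht⟩ := isWord_cons h
    rw [wordProd_cons]
    simp only [Set.mem_Icc, not_and_or, not_le] at hk
    rw [Equiv.Perm.mul_apply, ih ht]
    rw [Equiv.swap_apply_of_ne_of_ne (by omega) (by omega)]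

theorem wordProd_mem {n : ℕ} {l : List ℕ} (h : isWord n l) {k : ℕ}
    (hk : k ∈ Set.Icc 1 n) : wordProd l k ∈ Set.Icc 1 n := by
  induction l with
  | nil => exact hk
  | cons i t ih =>
    obtain ⟨⟨hi1, hi2⟩, ht⟩ := isWord_cons h
    rw [wordProd_cons, Equiv.Perm.mul_apply]
    have := ih ht
    rw [Equiv.swap_apply_def]
    simp only [Set.mem_Icc] at this ⊢
    split_ifs <;> omega

/-- A permutation given by a word is determined by its action on `Icc 1 n`. -/
theorem wordProd_ext {n : ℕ} {l l' : List ℕ} (h : isWord n l) (h' : isWord n l')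
    (hsame : ∀ k ∈ Set.Icc 1 n, wordProd l k = wordProd l' k) :
    wordProd l = wordProd l' := by
  ext k
  by_cases hk : k ∈ Set.Icc 1 n
  · exact hsame k hk
  · rw [wordProd_fix h hk, wordProd_fix h' hk]

/-- The exchange property: if `u⁻¹ i > u⁻¹ (i+1)` then `s_i u` has a strictly shorter word. -/
theorem exchange {n : ℕ} : ∀ (t : List ℕ), isWord n t → ∀ i : ℕ,
    (wordProd t)⁻¹ (i + 1) < (wordProd t)⁻¹ i →
    ∃ t', isWord n t' ∧ wordProd t' = Equiv.swap i (i + 1) * wordProd t ∧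
      t'.length + 1 ≤ t.length := by
  intro t
  induction t using List.reverseRecOn with
  | nil =>
    intro _ i hd
    exfalso
    simp only [wordProd_nil, inv_one, Equiv.Perm.one_apply] at hd
    omega
  | append_singleton r j ih =>
    intro hw i hd
    have hwr : isWord n r := fun x hx => hw x (by simp [hx])
    set v := wordProd r with hv
    have hu : wordProd (r ++ [j]) = v * Equiv.swap j (j + 1) := wordProd_concat r j
    rw [hu] at hd
    have hinv : ∀ x, (v * Equiv.swap j (j + 1))⁻¹ x = Equiv.swap j (j + 1) (v⁻¹ x) := by
      intro x
      rw [mul_inv_rev, Equiv.Perm.mul_apply, Equiv.swap_inv]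
    rw [hinv, hinv] at hd
    set a := v⁻¹ i with ha
    set b := v⁻¹ (i + 1) with hb
    by_cases hab : b < a
    · obtain ⟨r', hr'w, hr'p, hr'l⟩ := ih hwr i hab
      refine ⟨r' ++ [j], ?_, ?_, ?_⟩
      · intro x hx
        rcases List.mem_append.mp hx with hx | hx
        · exact hr'w x hx
        · simp only [List.mem_singleton] at hx
          rw [hx]; exact hw j (by simp)
      · rw [wordProd_concat, hr'p, hu, mul_assoc]
      · simp only [List.length_append, List.length_singleton] at *
        omega
    · -- b ≥ a; since swap j (j+1) reverses them, must have a = j, b = j + 1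
      push_neg at hab
      have hne : a ≠ b := by
        intro hcon
        have : i = i + 1 := by
          have := congrArg v hcon
          simpa [ha, hb] using this
        omega
      have hab' : a < b := lt_of_le_of_ne hab hne
      have hkey : a = j ∧ b = j + 1 := by
        have hsb : Equiv.swap j (j + 1) b < Equiv.swap j (j + 1) a := hd
        rw [Equiv.swap_apply_def, Equiv.swap_apply_def] at hsb
        split_ifs at hsb <;> omega
      refine ⟨r, hwr, ?_, by simp⟩
      have hvj : v j = i := by rw [← hkey.1, ha]; simp
      have hvj1 : v (j + 1) = i + 1 := by rw [← hkey.2, hb]; simp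
      have hconj : Equiv.swap i (i + 1) = v * Equiv.swap j (j + 1) * v⁻¹ := by
        rw [← hvj1, ← hvj]
        exact Equiv.swap_apply_apply v j (j + 1)
      have hcalc : (v * Equiv.swap j (j + 1) * v⁻¹) * (v * Equiv.swap j (j + 1)) = v := by
        rw [mul_assoc, inv_mul_cancel_left, mul_assoc, Equiv.swap_mul_self, mul_one]
      rw [hu, hconj, hcalc]

end Aux2
noncomputable section Aux3

/-! ### Analytic lemma: `q^{2z} = q²` forces `z = 1` -/

theorem qpow_eq_sq {q : ℝ} (hq0 : 0 < q) (hq1 : q ≠ 1) {z : ℂ}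
    (hlog : 0 < Real.log (q ^ 2))
    (him : |z.im| < 2 * Real.pi / Real.log (q ^ 2))
    (h : qpow q z = (q : ℂ) ^ 2) : z = 1 := by
  have hq2 : (0 : ℝ) < q ^ 2 := by positivity
  have hqc : ((q : ℂ)) ^ 2 = Complex.exp ((Real.log (q ^ 2) : ℝ) : ℂ) := by
    rw [← Complex.ofReal_exp, Real.exp_log hq2]
    norm_cast
  rw [qpow, hqc, Complex.exp_eq_exp_iff_exists_int] at h
  obtain ⟨k, hk⟩ := h
  have him' : (z * ((Real.log (q ^ 2) : ℝ) : ℂ)).im = z.im * Real.log (q ^ 2) := by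
    simp [Complex.mul_im]
  have hrhs : (((Real.log (q ^ 2) : ℝ) : ℂ) + (k : ℂ) * (2 * (Real.pi : ℂ) * Complex.I)).im
      = k * (2 * Real.pi) := by
    simp [Complex.add_im, Complex.mul_im, Complex.mul_re]
  have him2 : z.im * Real.log (q ^ 2) = k * (2 * Real.pi) := by rw [← him', ← hrhs, hk]
  have hpi := Real.pi_pos
  have hk0 : k = 0 := by
    have habs : |z.im * Real.log (q ^ 2)| < 2 * Real.pi := by
      rw [abs_mul, abs_of_pos hlog]
      calc |z.im| * Real.log (q ^ 2)
          < (2 * Real.pi / Real.log (q ^ 2)) * Real.log (q ^ 2) := by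
            exact mul_lt_mul_of_pos_right him hlog
        _ = 2 * Real.pi := div_mul_cancel₀ _ (ne_of_gt hlog)
    rw [him2] at habs
    have habs2 : |(k : ℝ)| < 1 := by
      rw [abs_mul, abs_of_pos (by positivity : (0:ℝ) < 2 * Real.pi)] at habs
      nlinarith [abs_nonneg (k : ℝ)]
    have h3 : (-1 : ℝ) < k ∧ (k : ℝ) < 1 := abs_lt.mp habs2
    have h1 : (-1 : ℤ) < k := by exact_mod_cast h3.1
    have h2 : (k : ℤ) < 1 := by exact_mod_cast h3.2
    omega
  rw [hk0] at hk
  have hk' : z * ((Real.log (q ^ 2) : ℝ) : ℂ) = ((Real.log (q ^ 2) : ℝ) : ℂ) := by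
    rw [hk]; push_cast; ring
  have hsne : ((Real.log (q ^ 2) : ℝ) : ℂ) ≠ 0 :=
    Complex.ofReal_ne_zero.mpr (ne_of_gt hlog)
  exact mul_right_cancel₀ hsne (by rw [hk', one_mul])

/-- The positivity of `log (q²)` given a box in the shape. -/
theorem log_pos_of_cell {q : ℝ} (P : PlacedSkewShape q) {b : ℕ × ℕ}
    (hb : b ∈ P.S.cells) : 0 < Real.log (q ^ 2) := by
  obtain ⟨h0, h1⟩ := P.im_range b hb
  have h2 : 0 < 2 * Real.pi / Real.log (q ^ 2) := lt_of_le_of_lt h0 h1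
  have hpi := Real.pi_pos
  by_contra hc
  push_neg at hc
  rcases lt_or_eq_of_le hc with hc | hc
  · have hle : 2 * Real.pi / Real.log (q ^ 2) ≤ 0 :=
      div_nonpos_of_nonneg_of_nonpos (by positivity) (le_of_lt hc)
    linarith
  · rw [hc, div_zero] at h2
    exact lt_irrefl 0 h2

/-- Key nonvanishing: if the diagonals are not adjacent in the right way, then
`q^{2(c b - c b')} ≠ q²`. -/
theorem qpow_ne_sq {q : ℝ} (hq0 : 0 < q) (hq1 : q ≠ 1) (P : PlacedSkewShape q)
    {b b' : ℕ × ℕ} (hb : b ∈ P.S.cells) (hb' : b' ∈ P.S.cells)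
    (hdiag : boxDiag b ≠ boxDiag b' + 1) :
    qpow q (P.c b - P.c b') ≠ (q : ℂ) ^ 2 := by
  intro h
  have hlog := log_pos_of_cell P hb
  have him : |(P.c b - P.c b').im| < 2 * Real.pi / Real.log (q ^ 2) := by
    obtain ⟨h1, h2⟩ := P.im_range b hb
    obtain ⟨h3, h4⟩ := P.im_range b' hb'
    rw [Complex.sub_im, abs_lt]
    constructor <;> linarith
  have hz := qpow_eq_sq hq0 hq1 hlog him h
  have hc : P.c b = P.c b' + 1 := by
    have := sub_eq_iff_eq_add.mp hz
    linear_combination this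
  exact hdiag ((P.adj_diag b' hb' b hb).mp hc)

/-- The coefficient `q⁻¹ + (q - q⁻¹)/(1 - Q)` is nonzero provided `Q ≠ q²`. -/
theorem coeff_ne_zero {q : ℝ} (hq0 : 0 < q) {Q : ℂ} (hQ : Q ≠ (q : ℂ) ^ 2) :
    (q : ℂ)⁻¹ + ((q : ℂ) - (q : ℂ)⁻¹) / (1 - Q) ≠ 0 := by
  have hqc : (q : ℂ) ≠ 0 := by
    simp only [ne_eq, Complex.ofReal_eq_zero]
    exact ne_of_gt hq0
  by_cases h1 : (1 : ℂ) - Q = 0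
  · rw [h1, div_zero, add_zero]
    exact inv_ne_zero hqc
  · intro h
    have key : ((q : ℂ)⁻¹ + ((q : ℂ) - (q : ℂ)⁻¹) / (1 - Q)) * ((q : ℂ) * (1 - Q))
        = (q : ℂ) ^ 2 - Q := by
      field_simp
      ring
    rw [h, zero_mul] at key
    exact hQ (by linear_combination key)

/-! ### The key combinatorial lemma: entries `i`, `i+1` exchangeable in a standard
tableau never sit on adjacent diagonals with `i` to the northeast. -/

theorem diag_aux {S : SkewShape} {off n i r1 c1 r2 c2 : ℕ} {L' L : StdTab S off n}
    (hsw : IsSwapTab i L' L)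
    (h1 : (r1, c1) ∈ S.cells) (h2 : (r2, c2) ∈ S.cells)
    (e1 : L'.entry (r1, c1) = i) (e2 : L'.entry (r2, c2) = i + 1)
    (hd : (c1 : ℤ) - (r1 : ℤ) = (c2 : ℤ) - (r2 : ℤ) + 1) : False := by
  rcases lt_trichotomy c1 c2 with hc | hc | hc
  · -- c1 < c2, so r2 = r1 + (c2 - c1) + 1 ≥ r1 + 2
    have hcorner := SkewShape.corner_mem h1 h2 (by omega) (by omega)
    have hrow := L'.row_chain (c2 - c1) h1
      (by rw [show c1 + (c2 - c1) = c2 from by omega]; exact hcorner)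
    rw [show c1 + (c2 - c1) = c2 from by omega] at hrow
    have hcol := L'.col_chain (r2 - r1) hcorner
      (by rw [show r1 + (r2 - r1) = r2 from by omega]; exact h2)
    rw [show r1 + (r2 - r1) = r2 from by omega] at hcol
    omega
  · -- c1 = c2, so r2 = r1 + 1: column adjacent, contradicts standardness of L
    subst hc
    have hr : r2 = r1 + 1 := by omega
    rw [hr] at h2 e2
    have := L.col_inc r1 c1 h1 h2
    rw [hsw (r1, c1), hsw (r1 + 1, c1), e1, e2, swapEnt_i, swapEnt_i1] at this
    omega
  · by_cases hcc : c1 = c2 + 1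
    · -- row adjacent with i+1 to the left: contradicts standardness of L'
      have hr : r1 = r2 := by omega
      subst hcc
      rw [hr] at h1 e1
      have := L'.row_inc r2 c2 h2 h1
      omega
    · -- i+1 strictly northwest of i
      have hcorner := SkewShape.corner_mem h2 h1 (by omega) (by omega)
      have hrow := L'.row_chain (c1 - c2) h2
        (by rw [show c2 + (c1 - c2) = c1 from by omega]; exact hcorner)
      rw [show c2 + (c1 - c2) = c1 from by omega] at hrow
      have hcol := L'.col_chain (r1 - r2) hcorner
        (by rw [show r2 + (r1 - r2) = r1 from by omega]; exact h1)
      rw [show r2 + (r1 - r2) = r1 from by omega] at hcol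
      omega

theorem diag_ne {S : SkewShape} {n i : ℕ} {L' L : StdTab S 0 n}
    (hsw : IsSwapTab i L' L) (hi : 1 ≤ i) (hin : i + 1 ≤ n) :
    boxDiag (L'.box i) ≠ boxDiag (L'.box (i + 1)) + 1 := by
  have hiI : (i : ℕ) ∈ Set.Icc (0 + 1) (0 + n) := by
    simp only [Set.mem_Icc, zero_add]; omega
  have hi1I : (i + 1 : ℕ) ∈ Set.Icc (0 + 1) (0 + n) := by
    simp only [Set.mem_Icc, zero_add]; omega
  have hm1 := L'.box_mem hiI
  have hm2 := L'.box_mem hi1I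
  have he1 := L'.entry_box hiI
  have he2 := L'.entry_box hi1I
  rcases hB1 : L'.box i with ⟨r1, c1⟩
  rcases hB2 : L'.box (i + 1) with ⟨r2, c2⟩
  rw [hB1] at hm1 he1
  rw [hB2] at hm2 he2
  intro hd
  simp only [boxDiag] at hd
  exact diag_aux hsw hm1 hm2 he1 he2 hd

end Aux3
noncomputable section Aux4

/-- The span of the basis vectors `v_K` with `(wrd K).length < p`. -/
def Wlt {S : SkewShape} {n : ℕ} (wrd : StdTab S 0 n → List ℕ) (p : ℕ) :
    Submodule ℂ (StdTab S 0 n →₀ ℂ) :=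
  Submodule.span ℂ {m | ∃ K : StdTab S 0 n, (wrd K).length < p ∧ m = Finsupp.single K 1}

theorem stdTab_finite (S : SkewShape) (n : ℕ) : Finite (StdTab S 0 n) := by
  let f : StdTab S 0 n → ({ b // b ∈ S.cells } → Fin (n + 1)) := fun L b =>
    ⟨L.entry b, by
      have := L.entry_mem b.2
      simp only [Set.mem_Icc, zero_add] at this
      omega⟩
  have hf : Function.Injective f := by
    intro L1 L2 h
    apply StdTab.ext'
    funext b
    by_cases hb : b ∈ S.cells
    · have := congrFun h ⟨b, hb⟩
      simpa [f, Fin.mk.injEq] using this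
    · rw [L1.zero_off b hb, L2.zero_off b hb]
  exact Finite.of_injective f hf

section Main

variable {q : ℝ} {n : ℕ} {P : PlacedSkewShape q}
  {A : AHMod n (q : ℂ) (StdTab P.S 0 n →₀ ℂ)} {C : StdTab P.S 0 n}
  {wrd : StdTab P.S 0 n → List ℕ}

/-- Any word acting on `C` like `K` is at least as long as the chosen reduced word. -/
theorem wrdlen_le
    (hwrd : ∀ L : StdTab P.S 0 n, isReducedWord n (wrd L) ∧
        ∀ b ∈ P.S.cells, L.entry b = wordProd (wrd L) (C.entry b))
    (K : StdTab P.S 0 n) (l : List ℕ) (hl : isWord n l)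
    (hmatch : ∀ b ∈ P.S.cells, K.entry b = wordProd l (C.entry b)) :
    (wrd K).length ≤ l.length := by
  apply (hwrd K).1.2 l hl
  apply wordProd_ext hl (hwrd K).1.1
  intro k hk
  have hk' : k ∈ Set.Icc (0 + 1) (0 + n) := by simpa using hk
  obtain ⟨b, hb, hbe⟩ := C.bijOn.surjOn hk'
  have hb' : b ∈ P.S.cells := hb
  rw [← hbe, ← hmatch b hb', ← (hwrd K).2 b hb']

/-- The operators `T_i` map `Wlt p` into `Wlt (p+1)`. -/
theorem T_maps_Wlt (hA : IsHTilde n P A)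
    (hwrd : ∀ L : StdTab P.S 0 n, isReducedWord n (wrd L) ∧
        ∀ b ∈ P.S.cells, L.entry b = wordProd (wrd L) (C.entry b))
    {i : ℕ} (hi : 1 ≤ i) (hin : i + 1 ≤ n) (p : ℕ) :
    ∀ m ∈ Wlt wrd p, A.T i m ∈ Wlt wrd (p + 1) := by
  intro m hm
  induction hm using Submodule.span_induction with
  | mem m hmem =>
    obtain ⟨K, hK, rfl⟩ := hmem
    rw [hA.2 i hi (by omega) K]
    apply Submodule.add_mem
    · exact Submodule.smul_mem _ _ (Submodule.subset_span ⟨K, by omega, rfl⟩)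
    · rcases vswap_cases i K with ⟨K', hsw, heq⟩ | heq
      · rw [heq]
        apply Submodule.smul_mem
        apply Submodule.subset_span
        refine ⟨K', ?_, rfl⟩
        have hlen : (wrd K').length ≤ (i :: wrd K).length := by
          apply wrdlen_le hwrd K' (i :: wrd K)
          · intro j hj
            rcases List.mem_cons.mp hj with hj | hj
            · subst hj; exact ⟨hi, hin⟩
            · exact (hwrd K).1.1 j hj
          · intro b hb
            rw [hsw b, swapEnt_eq_swap, (hwrd K).2 b hb, wordProd_cons,
              Equiv.Perm.mul_apply]
        simp only [List.length_cons] at hlen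
        omega
      · rw [heq, smul_zero]
        exact Submodule.zero_mem _
  | zero => rw [map_zero]; exact Submodule.zero_mem _
  | add x y hx hy ihx ihy => rw [map_add]; exact Submodule.add_mem _ ihx ihy
  | smul a x hx ihx => rw [map_smul]; exact Submodule.smul_mem _ _ ihx

/-- Triangularity: for a reduced word `l` with `L = (wordProd l) C`,
`T_l v_C = coef • v_L + (lower terms)` with `coef ≠ 0`. -/
theorem main_tri (hq0 : 0 < q) (hq1 : q ≠ 1) (hA : IsHTilde n P A) (hC : IsColReading C)
    (hwrd : ∀ L : StdTab P.S 0 n, isReducedWord n (wrd L) ∧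
        ∀ b ∈ P.S.cells, L.entry b = wordProd (wrd L) (C.entry b)) :
    ∀ l : List ℕ, isReducedWord n l → ∀ L : StdTab P.S 0 n,
      (∀ b ∈ P.S.cells, L.entry b = wordProd l (C.entry b)) →
      ∃ coef : ℂ, coef ≠ 0 ∧
        TopWord A l (Finsupp.single C 1) - coef • Finsupp.single L 1 ∈ Wlt wrd l.length := by
  intro l
  induction l with
  | nil =>
    intro _ L hmatch
    have hLC : L = C := by
      apply StdTab.ext'
      funext b
      by_cases hb : b ∈ P.S.cells
      · rw [hmatch b hb, wordProd_nil, Equiv.Perm.one_apply]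
      · rw [L.zero_off b hb, C.zero_off b hb]
    refine ⟨1, one_ne_zero, ?_⟩
    have : TopWord A [] (Finsupp.single C 1) = Finsupp.single C 1 := by
      simp [TopWord]
    rw [this, hLC, one_smul, sub_self]
    exact Submodule.zero_mem _
  | cons i t ih =>
    intro hred L hmatch
    obtain ⟨⟨hi, hin⟩, htw⟩ := isWord_cons hred.1
    -- the tail is reduced
    have ht_red : isReducedWord n t := by
      refine ⟨htw, fun l' hl' hp => ?_⟩
      have := hred.2 (i :: l') (by
          intro j hj
          rcases List.mem_cons.mp hj with hj | hj
          · subst hj; exact ⟨hi, hin⟩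
          · exact hl' j hj)
        (by rw [wordProd_cons, hp, wordProd_cons])
      simpa using this
    set u := wordProd t with hu
    -- descent: u⁻¹ i < u⁻¹ (i+1)
    have hlt : u⁻¹ i < u⁻¹ (i + 1) := by
      rcases lt_trichotomy (u⁻¹ i) (u⁻¹ (i + 1)) with h | h | h
      · exact h
      · exfalso
        have := congrArg u h
        simp only [Equiv.Perm.inv_def, Equiv.apply_symm_apply] at this
        omega
      · exfalso
        obtain ⟨t', ht'w, ht'p, ht'l⟩ := exchange t htw i h
        have hred2 := hred.2 t' ht'w (by rw [ht'p, wordProd_cons])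
        simp only [List.length_cons] at hred2
        omega
    -- boxes of i and i+1 in L
    have hiI : (i : ℕ) ∈ Set.Icc (0 + 1) (0 + n) := by
      simp only [Set.mem_Icc, zero_add]; omega
    have hi1I : (i + 1 : ℕ) ∈ Set.Icc (0 + 1) (0 + n) := by
      simp only [Set.mem_Icc, zero_add]; omega
    have hbImem := L.box_mem hiI
    have hbI1mem := L.box_mem hi1I
    have heI := L.entry_box hiI
    have heI1 := L.entry_box hi1I
    have h1 : u (C.entry (L.box i)) = i + 1 := by
      have hm := hmatch (L.box i) hbImem
      rw [heI, wordProd_cons, Equiv.Perm.mul_apply] at hm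
      have h2 := congrArg (Equiv.swap i (i + 1)) hm
      rw [Equiv.swap_apply_left, Equiv.swap_apply_self] at h2
      exact h2.symm
    have h2 : u (C.entry (L.box (i + 1))) = i := by
      have hm := hmatch (L.box (i + 1)) hbI1mem
      rw [heI1, wordProd_cons, Equiv.Perm.mul_apply] at hm
      have h3 := congrArg (Equiv.swap i (i + 1)) hm
      rw [Equiv.swap_apply_right, Equiv.swap_apply_self] at h3
      exact h3.symm
    have hCC : C.entry (L.box (i + 1)) < C.entry (L.box i) := by
      have e1 : C.entry (L.box i) = u⁻¹ (i + 1) := by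
        have h4 := congrArg (u⁻¹ : Equiv.Perm ℕ) h1
        simp only [Equiv.Perm.inv_def, Equiv.symm_apply_apply] at h4
        exact h4
      have e2 : C.entry (L.box (i + 1)) = u⁻¹ i := by
        have h4 := congrArg (u⁻¹ : Equiv.Perm ℕ) h2
        simp only [Equiv.Perm.inv_def, Equiv.symm_apply_apply] at h4
        exact h4
      rw [e1, e2]; exact hlt
    have hcolLT : colLT (L.box (i + 1)) (L.box i) :=
      (hC (L.box (i + 1)) hbI1mem (L.box i) hbImem).mpr hCC
    -- construct L' = s_i L
    obtain ⟨L', hswL⟩ := exists_swapTab L hi hin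
      (by
        intro r c hm1 hm2 ⟨hei, hei1⟩
        have e1 : ((r, c) : ℕ × ℕ) = L.box i := L.box_eq hiI hm1 hei
        have e2 : ((r, c + 1) : ℕ × ℕ) = L.box (i + 1) := L.box_eq hi1I hm2 hei1
        rw [← e1, ← e2] at hcolLT
        simp only [colLT] at hcolLT
        omega)
      (by
        intro r c hm1 hm2 ⟨hei, hei1⟩
        have e1 : ((r, c) : ℕ × ℕ) = L.box i := L.box_eq hiI hm1 hei
        have e2 : ((r + 1, c) : ℕ × ℕ) = L.box (i + 1) := L.box_eq hi1I hm2 hei1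
        rw [← e1, ← e2] at hcolLT
        simp only [colLT] at hcolLT
        omega)
    have hswap' : IsSwapTab i L' L := hswL.symm
    have hmatch' : ∀ b ∈ P.S.cells, L'.entry b = u (C.entry b) := by
      intro b hb
      rw [hswL b, swapEnt_eq_swap, hmatch b hb, wordProd_cons, Equiv.Perm.mul_apply,
        Equiv.swap_apply_self]
    obtain ⟨c', hc', hmem'⟩ := ih ht_red L' hmatch'
    -- the coefficient
    have hbm1 := L'.box_mem hiI
    have hbm2 := L'.box_mem hi1I
    have hκ : (q : ℂ)⁻¹ + TLL P 0 n i L' ≠ 0 := by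
      rw [TLL]
      exact coeff_ne_zero hq0 (qpow_ne_sq hq0 hq1 P hbm1 hbm2 (diag_ne hswap' hi hin))
    refine ⟨c' * ((q : ℂ)⁻¹ + TLL P 0 n i L'), mul_ne_zero hc' hκ, ?_⟩
    -- algebra
    have hTop : TopWord A (i :: t) (Finsupp.single C 1)
        = A.T i (TopWord A t (Finsupp.single C 1)) := by
      simp only [TopWord, List.map_cons, List.prod_cons, Module.End.mul_apply]
    have hdecomp : TopWord A t (Finsupp.single C 1)
        = c' • Finsupp.single L' 1 +
          (TopWord A t (Finsupp.single C 1) - c' • Finsupp.single L' 1) := by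
      abel
    have hTi : A.T i (Finsupp.single L' 1)
        = TLL P 0 n i L' • Finsupp.single L' 1 +
          ((q : ℂ)⁻¹ + TLL P 0 n i L') • Finsupp.single L 1 := by
      rw [hA.2 i hi (by omega) L', vswap_eq_single hswap']
    rw [hTop, hdecomp, map_add, map_smul, hTi]
    have hAlg :
        c' • (TLL P 0 n i L' • Finsupp.single L' 1 +
            ((q : ℂ)⁻¹ + TLL P 0 n i L') • Finsupp.single L 1) +
          A.T i (TopWord A t (Finsupp.single C 1) - c' • Finsupp.single L' 1) -
          (c' * ((q : ℂ)⁻¹ + TLL P 0 n i L')) • Finsupp.single L 1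
        = c' • (TLL P 0 n i L' • Finsupp.single L' 1) +
          A.T i (TopWord A t (Finsupp.single C 1) - c' • Finsupp.single L' 1) := by
      module
    rw [hAlg]
    have hlen : (i :: t).length = t.length + 1 := by simp
    rw [hlen]
    apply Submodule.add_mem
    · apply Submodule.smul_mem
      apply Submodule.smul_mem
      apply Submodule.subset_span
      refine ⟨L', ?_, rfl⟩
      have := wrdlen_le hwrd L' t htw hmatch'
      omega
    · exact T_maps_Wlt hA hwrd hi hin t.length _ hmem'

end Main

end Aux4
/-- Young's natural basis.  Let `C` be the column reading tableau of shape
`λ/μ` and, for each standard tableau `L = wC`, let `n_L = T_w v_C` (computed from any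
reduced word for `w`).  Then `{n_L}` is a basis of `H̃^{(c,λ/μ)}`. -/
theorem natural_basis_is_basis
    (q : ℝ) (hq0 : 0 < q) (hq1 : q ≠ 1) (n : ℕ)
    (P : PlacedSkewShape q) (hn : P.S.cells.card = n)
    (A : AHMod n (q : ℂ) (StdTab P.S 0 n →₀ ℂ)) (hA : IsHTilde n P A)
    (C : StdTab P.S 0 n) (hC : IsColReading C)
    (wrd : StdTab P.S 0 n → List ℕ)
    (hwrd : ∀ L : StdTab P.S 0 n, isReducedWord n (wrd L) ∧
        ∀ b ∈ P.S.cells, L.entry b = wordProd (wrd L) (C.entry b)) :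
    LinearIndependent ℂ
        (fun L : StdTab P.S 0 n => TopWord A (wrd L) (Finsupp.single C 1)) ∧
      Submodule.span ℂ
        (Set.range fun L : StdTab P.S 0 n => TopWord A (wrd L) (Finsupp.single C 1)) = ⊤ := by
  have hfin : Finite (StdTab P.S 0 n) := stdTab_finite P.S n
  letI : Fintype (StdTab P.S 0 n) := Fintype.ofFinite _
  set Nspan : Submodule ℂ (StdTab P.S 0 n →₀ ℂ) := Submodule.span ℂ
    (Set.range fun L : StdTab P.S 0 n => TopWord A (wrd L) (Finsupp.single C 1)) with hNspan
  -- every basis vector lies in the span of the n_L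
  have hvK : ∀ K : StdTab P.S 0 n, Finsupp.single K (1 : ℂ) ∈ Nspan := by
    have hstep : ∀ p : ℕ, ∀ K : StdTab P.S 0 n, (wrd K).length < p →
        Finsupp.single K (1 : ℂ) ∈ Nspan := by
      intro p
      induction p with
      | zero => intro K hK; omega
      | succ p ihp =>
        intro K hK
        obtain ⟨coef, hc0, hmem⟩ := main_tri hq0 hq1 hA hC hwrd (wrd K) (hwrd K).1 K (hwrd K).2
        have hWsub : Wlt wrd (wrd K).length ≤ Nspan := by
          apply Submodule.span_le.mpr
          rintro m ⟨K', hK', rfl⟩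
          exact ihp K' (by omega)
        have h2 : TopWord A (wrd K) (Finsupp.single C 1) ∈ Nspan :=
          Submodule.subset_span ⟨K, rfl⟩
        have h4 := Submodule.sub_mem Nspan h2 (hWsub hmem)
        rw [sub_sub_cancel] at h4
        have h5 : Finsupp.single K (1 : ℂ)
            = coef⁻¹ • (coef • Finsupp.single K (1 : ℂ)) := by
          rw [smul_smul, inv_mul_cancel₀ hc0, one_smul]
        rw [h5]
        exact Submodule.smul_mem _ _ h4
    intro K
    exact hstep ((wrd K).length + 1) K (by omega)
  have hspan : Nspan = ⊤ := by
    rw [eq_top_iff]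
    have hb : Submodule.span ℂ
        (Set.range fun K : StdTab P.S 0 n => Finsupp.single K (1 : ℂ)) = ⊤ := by
      have hbs := (Finsupp.basisSingleOne (R := ℂ) (ι := StdTab P.S 0 n)).span_eq
      rwa [Finsupp.coe_basisSingleOne] at hbs
    rw [← hb]
    apply Submodule.span_le.mpr
    rintro m ⟨K, rfl⟩
    exact hvK K
  haveI : FiniteDimensional ℂ (StdTab P.S 0 n →₀ ℂ) :=
    Module.Finite.of_basis (Finsupp.basisSingleOne (R := ℂ))
  have hcard : Fintype.card (StdTab P.S 0 n)
      = Module.finrank ℂ (StdTab P.S 0 n →₀ ℂ) :=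
    (Module.finrank_eq_card_basis (Finsupp.basisSingleOne (R := ℂ))).symm
  refine ⟨?_, hspan⟩
  exact linearIndependent_of_top_le_span_of_card_eq_finrank (le_of_eq hspan.symm) hcard
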